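/- The stationary Ornstein-Uhlenbeck process with drift matrix B (all eigenvalues with negative real part) and diffusion matrix Q = ΣΣ^T > 0 has entropy production rate e_p = 0 if and only if Q^{-1}B is symmetric, i.e., Q^{-1}B = (Q^{-1}B)^T. -/

import Mathlib

open Matrix MeasureTheory Filter
open scoped Matrix

attribute [local instance] Matrix.linftyOpNormedRing Matrix.linftyOpNormedAlgebra

/-- All eigenvalues of `B` have negative real part. -/
def IsStableMatrix {d : ℕ} (B : Matrix (Fin d) (Fin d) ℝ) : Prop :=
  ∀ z ∈ spectrum ℂ (B.map (algebraMap ℝ ℂ)), z.re < 0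

/-!
With `M = 2Q⁻¹B + Γ⁻¹` we have `QMΓ = 2BΓ + Q`, so the Lyapunov equation says exactly that
`QMΓ` is antisymmetric, while `e_p = ½ tr(Mᵀ · QMΓ)`. If `e_p = 0`, positivity of `Q` and `Γ`
forces `M = 0`, so `Q⁻¹B = -½Γ⁻¹` is symmetric. Conversely, if `Q⁻¹B` is symmetric then so is
`M`, and the trace of a symmetric matrix times an antisymmetric one vanishes.
-/

namespace Matrix

variable {n : Type*} [Fintype n]

theorem trace_mul_eq_zero_of_isSymm_of_transpose_eq_neg {R : Type*} [CommRing R]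
    [IsAddTorsionFree R] {A C : Matrix n n R} (hA : A.IsSymm) (hC : Cᵀ = -C) :
    (A * C).trace = 0 := by
  rw [← self_eq_neg]
  calc (A * C).trace = (A * C)ᵀ.trace := (trace_transpose _).symm
    _ = -(C * A).trace := by rw [transpose_mul, hC, hA.eq, Matrix.neg_mul, trace_neg]
    _ = -(A * C).trace := by rw [trace_mul_comm]

theorem isSymm_two_smul_add_iff {R : Type*} [Field R] [CharZero R] {S C : Matrix n n R}
    (hC : C.IsSymm) : ((2 : R) • S + C).IsSymm ↔ S.IsSymm := by
  rw [IsSymm, transpose_add, transpose_smul, hC.eq, add_left_inj]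
  exact (smul_right_injective _ two_ne_zero).eq_iff

variable [DecidableEq n]

theorem transpose_mul_mul_eq_neg_of_lyapunov {R : Type*} [CommRing R] {B Q Γ : Matrix n n R}
    (hQ : Q.IsSymm) (hΓ : Γ.IsSymm) (hQu : IsUnit Q) (hΓu : IsUnit Γ)
    (hlyap : B * Γ + Γ * Bᵀ + Q = 0) :
    (Q * ((2 : R) • (Q⁻¹ * B) + Γ⁻¹) * Γ)ᵀ = -(Q * ((2 : R) • (Q⁻¹ * B) + Γ⁻¹) * Γ) := by
  have hQMΓ : Q * ((2 : R) • (Q⁻¹ * B) + Γ⁻¹) * Γ = (2 : R) • (B * Γ) + Q := by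
    rw [Matrix.mul_add, Matrix.add_mul, Matrix.mul_smul, ← Matrix.mul_assoc,
      mul_nonsing_inv Q ((isUnit_iff_isUnit_det Q).mp hQu), Matrix.one_mul, Matrix.smul_mul,
      Matrix.mul_assoc, nonsing_inv_mul Γ ((isUnit_iff_isUnit_det Γ).mp hΓu), Matrix.mul_one]
  rw [hQMΓ, transpose_add, transpose_smul, transpose_mul, hQ.eq, hΓ.eq, eq_neg_iff_add_eq_zero]
  calc (2 : R) • (Γ * Bᵀ) + Q + ((2 : R) • (B * Γ) + Q) = (2 : R) • (B * Γ + Γ * Bᵀ + Q) := by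
        module
    _ = 0 := by rw [hlyap, smul_zero]

open scoped ComplexOrder MatrixOrder in
theorem PosDef.trace_conjTranspose_mul_mul_mul_eq_zero_iff {𝕜 : Type*} [RCLike 𝕜]
    {P R : Matrix n n 𝕜} (hP : P.PosDef) (hR : R.PosDef) {M : Matrix n n 𝕜} :
    (Mᴴ * P * M * R).trace = 0 ↔ M = 0 := by
  refine ⟨fun h => ?_, fun h => by simp [h]⟩
  obtain ⟨x, hx, rfl⟩ := CStarAlgebra.isStrictlyPositive_iff_eq_star_mul_self.mp
    hP.isStrictlyPositive
  obtain ⟨y, hy, rfl⟩ := CStarAlgebra.isStrictlyPositive_iff_eq_mul_star_self.mp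
    hR.isStrictlyPositive
  have hxMy : x * M * y = 0 := by
    rw [← trace_conjTranspose_mul_self_eq_zero_iff, ← h]
    simp only [conjTranspose_mul, star_eq_conjTranspose, Matrix.mul_assoc]
    rw [trace_mul_comm yᴴ]
    simp only [Matrix.mul_assoc]
  lift x to (Matrix n n 𝕜)ˣ using hx
  lift y to (Matrix n n 𝕜)ˣ using hy
  simpa [← Matrix.mul_assoc] using congr(x⁻¹ * $hxMy * y⁻¹)

end Matrix

theorem entropy_production_rate_zero_iff_symm_general {d : ℕ} (B Q Γ : Matrix (Fin d) (Fin d) ℝ)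
    (hQ : Q.PosDef) (hΓ : Γ.PosDef)
    (hlyap : B * Γ + Γ * Bᵀ + Q = 0) :
    (1 / 2 : ℝ) *
        ((((2:ℝ) • (Q⁻¹ * B) + Γ⁻¹)ᵀ * Q * ((2:ℝ) • (Q⁻¹ * B) + Γ⁻¹) * Γ).trace) = 0 ↔
      (Q⁻¹ * B).IsSymm := by
  set M := (2:ℝ) • (Q⁻¹ * B) + Γ⁻¹
  have hQsymm : Q.IsSymm := isHermitian_iff_isSymm.mp hQ.isHermitian
  have hΓsymm : Γ.IsSymm := isHermitian_iff_isSymm.mp hΓ.isHermitian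
  have hAnti : (Q * M * Γ)ᵀ = -(Q * M * Γ) :=
    transpose_mul_mul_eq_neg_of_lyapunov hQsymm hΓsymm hQ.isUnit hΓ.isUnit hlyap
  rw [← isSymm_two_smul_add_iff hΓsymm.inv, mul_eq_zero, or_iff_right (by norm_num)]
  change _ ↔ M.IsSymm
  constructor
  · intro h
    have hM : M = 0 := (hQ.trace_conjTranspose_mul_mul_mul_eq_zero_iff hΓ).mp h
    exact hM ▸ isSymm_zero
  · intro hM
    rw [hM.eq, Matrix.mul_assoc, Matrix.mul_assoc, ← Matrix.mul_assoc Q]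
    exact trace_mul_eq_zero_of_isSymm_of_transpose_eq_neg hM hAnti

/-- the entropy production rate `e_p = (1/2)tr((2Q⁻¹B + Γ⁻¹)ᵀQ(2Q⁻¹B + Γ⁻¹)Γ)`
of the stationary OU process vanishes iff `Q⁻¹B` is symmetric. -/
theorem entropy_production_rate_zero_iff_symm {d : ℕ} (B Q Γ : Matrix (Fin d) (Fin d) ℝ)
    (hB : IsStableMatrix B) (hQ : Q.PosDef) (hΓ : Γ.PosDef)
    (hlyap : B * Γ + Γ * Bᵀ + Q = 0) :
    (1 / 2 : ℝ) *
        ((((2:ℝ) • (Q⁻¹ * B) + Γ⁻¹)ᵀ * Q * ((2:ℝ) • (Q⁻¹ * B) + Γ⁻¹) * Γ).trace) = 0 ↔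
      (Q⁻¹ * B).IsSymm :=
  entropy_production_rate_zero_iff_symm_general B Q Γ hQ hΓ hlyap
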